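/- The canonical height on the Pell conic satisfies: h(2P) = 2·h(P) for all P ∈ C(ℚ); h(P + Q) ≤ h(P) + h(Q) for all P, Q ∈ C(ℚ); and more generally h(mP) = m·h(P) for every integer m ≥ 1 and every P ∈ C(ℚ). -/

import Mathlib

open Filter Real

/-- The defining equation of the Pell conic `X² - ΔY² = 4`. -/
def PellSol (Δ : ℚ) (P : ℚ × ℚ) : Prop := P.1 ^ 2 - Δ * P.2 ^ 2 = 4

/-- The rational points on the Pell conic `X² - ΔY² = 4`. -/
def Conic (Δ : ℚ) : Type := {P : ℚ × ℚ // PellSol Δ P}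

namespace Conic

variable {Δ : ℚ}

/-- Addition on the Pell conic. -/
instance : Add (Conic Δ) :=
  ⟨fun P Q => ⟨((P.val.1 * Q.val.1 + Δ * P.val.2 * Q.val.2) / 2,
    (P.val.1 * Q.val.2 + P.val.2 * Q.val.1) / 2), by
      have hP := P.property
      have hQ := Q.property
      unfold PellSol at *
      dsimp only
      linear_combination ((Q.val.1 ^ 2 - Δ * Q.val.2 ^ 2) / 4) * hP + hQ⟩⟩

/-- The neutral element `(2,0)` of the Pell conic. -/
instance : Zero (Conic Δ) := ⟨⟨(2, 0), by unfold PellSol; norm_num⟩⟩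

/-- The negative of a point on the Pell conic. -/
instance : Neg (Conic Δ) :=
  ⟨fun P => ⟨(P.val.1, -P.val.2), by
    have hP := P.property
    unfold PellSol at *
    dsimp only
    linear_combination hP⟩⟩

@[simp] lemma add_val (P Q : Conic Δ) :
    (P + Q).val = ((P.val.1 * Q.val.1 + Δ * P.val.2 * Q.val.2) / 2,
      (P.val.1 * Q.val.2 + P.val.2 * Q.val.1) / 2) := rfl

@[simp] lemma zero_val : ((0 : Conic Δ)).val = (2, 0) := rfl

@[simp] lemma neg_val (P : Conic Δ) : (-P).val = (P.val.1, -P.val.2) := rfl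

protected lemma add_assoc' (P Q R : Conic Δ) : P + Q + R = P + (Q + R) := by
  apply Subtype.ext
  rw [Prod.ext_iff, add_val, add_val, add_val, add_val]
  constructor <;> (dsimp only; ring)

protected lemma zero_add' (P : Conic Δ) : 0 + P = P := by
  apply Subtype.ext
  rw [Prod.ext_iff, add_val, zero_val]
  constructor <;> (dsimp only; ring)

protected lemma add_zero' (P : Conic Δ) : P + 0 = P := by
  apply Subtype.ext
  rw [Prod.ext_iff, add_val, zero_val]
  constructor <;> (dsimp only; ring)

protected lemma neg_add_cancel' (P : Conic Δ) : -P + P = 0 := by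
  have hP := P.property
  unfold PellSol at hP
  apply Subtype.ext
  rw [Prod.ext_iff, add_val, neg_val, zero_val]
  constructor
  · dsimp only
    linear_combination hP / 2
  · dsimp only; ring

protected lemma add_comm' (P Q : Conic Δ) : P + Q = Q + P := by
  apply Subtype.ext
  rw [Prod.ext_iff, add_val, add_val]
  constructor <;> (dsimp only; ring)

/-- The group structure on the rational points of the Pell conic. -/
instance : AddCommGroup (Conic Δ) where
  add := (· + ·)
  zero := 0
  neg := Neg.neg
  nsmul := nsmulRec
  zsmul := zsmulRec
  add_assoc := Conic.add_assoc'
  zero_add := Conic.zero_add'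
  add_zero := Conic.add_zero'
  neg_add_cancel := Conic.neg_add_cancel'
  add_comm := Conic.add_comm'

end Conic
section Extra

namespace Conic

variable {Δ : ℚ}

/-- The naive height of a point on a Pell conic: `H(x,y) = max(|num x|, den x)`. -/
noncomputable def height (P : Conic Δ) : ℝ :=
  max (|P.val.1.num| : ℝ) (P.val.1.den : ℝ)

/-- The logarithmic height `h₀(P) = log H(P)`. -/
noncomputable def logHeight (P : Conic Δ) : ℝ := Real.log (height P)

/-- The canonical height `h(P) = lim 2⁻ⁿ h₀(2ⁿ P)`. -/
noncomputable def canHeight (P : Conic Δ) : ℝ :=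
  limUnder atTop (fun n : ℕ => logHeight ((2 ^ n) • P) / 2 ^ n)

end Conic

/-- The integral points form a subgroup of the group of rational points on
the Pell conic `X² - ΔY² = 4` (for an integral `Δ`). -/
def intPoints (Δ : ℤ) : AddSubgroup (Conic (Δ : ℚ)) where
  carrier := {P | ∃ a b : ℤ, P.val = ((a : ℚ), (b : ℚ))}
  zero_mem' := ⟨2, 0, by rw [Conic.zero_val]; norm_num⟩
  neg_mem' := by
    rintro P ⟨a, b, h⟩
    exact ⟨a, -b, by rw [Conic.neg_val, h]; push_cast; rfl⟩
  add_mem' := by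
    rintro P Q ⟨a, b, hP⟩ ⟨c, e, hQ⟩
    have hPp := P.property
    have hQp := Q.property
    unfold PellSol at hPp hQp
    rw [hP] at hPp
    rw [hQ] at hQp
    dsimp only at hPp hQp
    have ha : a ^ 2 - Δ * b ^ 2 = 4 := by exact_mod_cast hPp
    have hc : c ^ 2 - Δ * e ^ 2 = 4 := by exact_mod_cast hQp
    have key : ∀ A B C E F : ZMod 2, A ^ 2 - F * B ^ 2 = 4 → C ^ 2 - F * E ^ 2 = 4 →
        (A * C + F * B * E = 0 ∧ A * E + B * C = 0) := by decide
    have ha2 : (a : ZMod 2) ^ 2 - (Δ : ZMod 2) * (b : ZMod 2) ^ 2 = 4 := by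
      have := congrArg (fun z : ℤ => (z : ZMod 2)) ha
      push_cast at this
      exact_mod_cast this
    have hc2 : (c : ZMod 2) ^ 2 - (Δ : ZMod 2) * (e : ZMod 2) ^ 2 = 4 := by
      have := congrArg (fun z : ℤ => (z : ZMod 2)) hc
      push_cast at this
      exact_mod_cast this
    obtain ⟨k1, k2⟩ := key (a : ZMod 2) (b : ZMod 2) (c : ZMod 2) (e : ZMod 2) (Δ : ZMod 2) ha2 hc2
    have d1 : (2 : ℤ) ∣ (a * c + Δ * b * e) := by
      have : ((a * c + Δ * b * e : ℤ) : ZMod 2) = 0 := by push_cast; linear_combination k1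
      exact_mod_cast (ZMod.intCast_zmod_eq_zero_iff_dvd _ 2).mp this
    have d2 : (2 : ℤ) ∣ (a * e + b * c) := by
      have : ((a * e + b * c : ℤ) : ZMod 2) = 0 := by push_cast; linear_combination k2
      exact_mod_cast (ZMod.intCast_zmod_eq_zero_iff_dvd _ 2).mp this
    obtain ⟨X, hX⟩ := d1
    obtain ⟨Y, hY⟩ := d2
    refine ⟨X, Y, ?_⟩
    rw [Conic.add_val, hP, hQ]
    have hX' : ((a : ℚ) * c + Δ * b * e) = 2 * X := by exact_mod_cast congrArg (fun z : ℤ => (z : ℚ)) hX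
    have hY' : ((a : ℚ) * e + b * c) = 2 * Y := by exact_mod_cast congrArg (fun z : ℤ => (z : ℚ)) hY
    rw [Prod.ext_iff]
    constructor
    · dsimp only
      rw [div_eq_iff (by norm_num : (2:ℚ) ≠ 0)]
      linarith [hX']
    · dsimp only
      rw [div_eq_iff (by norm_num : (2:ℚ) ≠ 0)]
      linarith [hY']

end Extra


section CanHeightProof

open Filter Real Topology

namespace Conic

variable {Δ : ℚ}

/-- The integer naive height. -/
def Hz (P : Conic Δ) : ℤ := max |P.val.1.num| (P.val.1.den : ℤ)

lemma one_le_Hz (P : Conic Δ) : 1 ≤ Hz P :=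
  le_max_of_le_right (by exact_mod_cast P.val.1.pos)

lemma height_eq_Hz (P : Conic Δ) : height P = (Hz P : ℝ) := by
  unfold height Hz
  push_cast
  rfl

lemma one_le_height (P : Conic Δ) : (1 : ℝ) ≤ height P := by
  rw [height_eq_Hz]; exact_mod_cast one_le_Hz P

lemma height_pos (P : Conic Δ) : (0 : ℝ) < height P :=
  lt_of_lt_of_le one_pos (one_le_height P)

lemma logHeight_nonneg (P : Conic Δ) : 0 ≤ logHeight P :=
  Real.log_nonneg (one_le_height P)

lemma num_eq_self_mul_den (q : ℚ) : (q.num : ℚ) = q * (q.den : ℚ) := by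
  have h := Rat.num_div_den q
  have hd : (q.den : ℚ) ≠ 0 := by exact_mod_cast q.den_nz
  exact (div_eq_iff hd).mp h

lemma isCoprime_num_den (q : ℚ) : IsCoprime q.num (q.den : ℤ) := by
  rw [Int.isCoprime_iff_gcd_eq_one]
  simpa [Int.gcd] using q.reduced

/-- If the `x`-coordinate can be written as `N/D`, the height is bounded. -/
lemma Hz_le_of_eq_div {P : Conic Δ} {N D M : ℤ} (hD : 0 < D)
    (hx : P.val.1 = (N : ℚ) / (D : ℚ)) (hN : |N| ≤ M) (hDM : D ≤ M) : Hz P ≤ M := by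
  have hnum : P.val.1.num ∣ N := by
    rw [hx, ← Rat.divInt_eq_div]; exact Rat.num_dvd N hD.ne'
  have hden : ((P.val.1.den : ℤ)) ∣ D := by
    rw [hx, ← Rat.divInt_eq_div]; exact Rat.den_dvd N D
  apply max_le
  · rcases eq_or_ne N 0 with h0 | h0
    · have hx0 : P.val.1 = 0 := by rw [hx, h0]; simp
      rw [hx0]
      simp only [Rat.num_ofNat, abs_zero]
      omega
    · have h1 : |P.val.1.num| ∣ |N| := (abs_dvd _ _).mpr ((dvd_abs _ _).mpr hnum)
      exact le_trans (Int.le_of_dvd (abs_pos.mpr h0) h1) hN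
  · exact le_trans (Int.le_of_dvd hD hden) hDM

/-- Doubling formula on the conic. -/
lemma add_self_fst (P : Conic Δ) : (P + P).val.1 = P.val.1 ^ 2 - 2 := by
  have h := P.property
  unfold PellSol at h
  rw [add_val]
  dsimp only
  rw [div_eq_iff (by norm_num : (2:ℚ) ≠ 0)]
  linear_combination -h

/-- The elementary integer inequality underlying the doubling estimates. -/
lemma int_double_ineq (r s : ℤ) (hs : 0 < s) :
    max |r ^ 2 - 2 * s ^ 2| (s ^ 2) ≤ 3 * (max |r| s) ^ 2 ∧
      (max |r| s) ^ 2 ≤ 3 * max |r ^ 2 - 2 * s ^ 2| (s ^ 2) := by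
  have h1 := le_max_left |r| s
  have h2 := le_max_right |r| s
  have h3 := le_max_left (|r ^ 2 - 2 * s ^ 2|) (s ^ 2)
  have h4 := le_max_right (|r ^ 2 - 2 * s ^ 2|) (s ^ 2)
  have h5 : r ^ 2 - 2 * s ^ 2 ≤ |r ^ 2 - 2 * s ^ 2| := le_abs_self _
  have h6 : |r| ^ 2 = r ^ 2 := sq_abs r
  have h7 : 0 ≤ |r| := abs_nonneg r
  constructor
  · apply max_le
    · rw [abs_le]
      constructor <;> nlinarith
    · nlinarith
  · rcases max_cases |r| s with ⟨he, hle⟩ | ⟨he, hle⟩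
    · rw [he, h6]
      rcases le_or_gt (r ^ 2) (3 * s ^ 2) with h8 | h8
      · nlinarith
      · nlinarith
    · rw [he]
      nlinarith

lemma Hz_double_bounds (P : Conic Δ) :
    Hz (P + P) ≤ 3 * Hz P ^ 2 ∧ Hz P ^ 2 ≤ 3 * Hz (P + P) := by
  obtain ⟨r, hr⟩ : ∃ r, P.val.1.num = r := ⟨_, rfl⟩
  obtain ⟨s, hs⟩ : ∃ s : ℤ, (P.val.1.den : ℤ) = s := ⟨_, rfl⟩
  have hs0 : 0 < s := hs ▸ (by exact_mod_cast P.val.1.pos)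
  have hsQ : (s : ℚ) ≠ 0 := by exact_mod_cast hs0.ne'
  have hrq : (r : ℚ) = P.val.1 * (s : ℚ) := by
    rw [← hr, ← hs]; push_cast; exact num_eq_self_mul_den P.val.1
  have hs2Q : ((s : ℚ)) ^ 2 ≠ 0 := pow_ne_zero _ hsQ
  have hx2 : (P + P).val.1 = ((r ^ 2 - 2 * s ^ 2 : ℤ) : ℚ) / ((s ^ 2 : ℤ) : ℚ) := by
    rw [add_self_fst]
    push_cast
    rw [hrq, eq_div_iff hs2Q]
    ring
  have hcop : IsCoprime (r ^ 2 - 2 * s ^ 2) (s ^ 2) := by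
    have h1 : IsCoprime r s := hr ▸ hs ▸ isCoprime_num_den P.val.1
    have h2 : IsCoprime (r ^ 2) (s ^ 2) := h1.pow
    have h3 := h2.add_mul_left_left (-2)
    have h4 : r ^ 2 + s ^ 2 * (-2) = r ^ 2 - 2 * s ^ 2 := by ring
    rwa [h4] at h3
  have hcopN : (r ^ 2 - 2 * s ^ 2).natAbs.Coprime (s ^ 2).natAbs := by
    have := Int.isCoprime_iff_gcd_eq_one.mp hcop
    simpa [Int.gcd] using this
  have hs2 : (0:ℤ) < s ^ 2 := by positivity
  have hnum : (P + P).val.1.num = r ^ 2 - 2 * s ^ 2 := by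
    rw [hx2]; exact Rat.num_div_eq_of_coprime hs2 hcopN
  have hden : (((P + P).val.1.den : ℤ)) = s ^ 2 := by
    rw [hx2]; exact Rat.den_div_eq_of_coprime hs2 hcopN
  have hHz2 : Hz (P + P) = max (|r ^ 2 - 2 * s ^ 2|) (s ^ 2) := by
    unfold Hz; rw [hnum, hden]
  have hHz : Hz P = max (|r|) s := by unfold Hz; rw [hr, hs]
  rw [hHz2, hHz]
  exact int_double_ineq r s hs0

variable {Δz : ℤ}

/-- Integral representation of a point on the conic with controlled denominator. -/
lemma repr_aux (hΔ : Δz ≠ 0) (x y : ℚ) (hxy : x ^ 2 - (Δz : ℚ) * y ^ 2 = 4) :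
    ∃ A B D : ℤ, 0 < D ∧ D ≤ |Δz| * max |x.num| (x.den : ℤ) ∧
      |A| ≤ |Δz| * max |x.num| (x.den : ℤ) ∧
      (A : ℚ) = x * (D : ℚ) ∧ (B : ℚ) = y * (D : ℚ) ∧
      A ^ 2 - Δz * B ^ 2 = 4 * D ^ 2 := by
  obtain ⟨r, hr⟩ : ∃ r, x.num = r := ⟨_, rfl⟩
  obtain ⟨s, hs⟩ : ∃ s : ℤ, (x.den : ℤ) = s := ⟨_, rfl⟩
  obtain ⟨m, hm⟩ : ∃ m, y.num = m := ⟨_, rfl⟩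
  obtain ⟨n, hn⟩ : ∃ n : ℤ, (y.den : ℤ) = n := ⟨_, rfl⟩
  have hs0 : 0 < s := hs ▸ (by exact_mod_cast x.pos)
  have hn0 : 0 < n := hn ▸ (by exact_mod_cast y.pos)
  have hsQ : (s : ℚ) ≠ 0 := by exact_mod_cast hs0.ne'
  have hnQ : (n : ℚ) ≠ 0 := by exact_mod_cast hn0.ne'
  have hrq : (r : ℚ) = x * (s : ℚ) := by
    rw [← hr, ← hs]; push_cast; exact num_eq_self_mul_den x
  have hmq : (m : ℚ) = y * (n : ℚ) := by
    rw [← hm, ← hn]; push_cast; exact num_eq_self_mul_den y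
  have keyQ : (r : ℚ) ^ 2 * (n : ℚ) ^ 2 - (Δz : ℚ) * ((m : ℚ) ^ 2 * (s : ℚ) ^ 2)
      = 4 * ((s : ℚ) ^ 2 * (n : ℚ) ^ 2) := by
    rw [hrq, hmq]
    linear_combination ((s : ℚ) ^ 2 * (n : ℚ) ^ 2) * hxy
  have key : r ^ 2 * n ^ 2 - Δz * (m ^ 2 * s ^ 2) = 4 * (s ^ 2 * n ^ 2) := by
    exact_mod_cast keyQ
  have hdvd1 : n ^ 2 ∣ (Δz * s ^ 2) * m ^ 2 :=
    ⟨r ^ 2 - 4 * s ^ 2, by linear_combination -key⟩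
  have hmn : IsCoprime m n := hm ▸ hn ▸ isCoprime_num_den y
  have hdvd2 : n ^ 2 ∣ Δz * s ^ 2 :=
    (IsCoprime.pow hmn.symm).dvd_of_dvd_mul_right hdvd1
  have hdvd3 : n ^ 2 ∣ (Δz * s) ^ 2 := hdvd2.trans ⟨Δz, by ring⟩
  have hdvd4 : n ∣ Δz * s := (Int.pow_dvd_pow_iff two_ne_zero).mp hdvd3
  have hdvd5 : n ∣ |Δz| * s := by
    have h1 : n ∣ |Δz * s| := (dvd_abs _ _).mpr hdvd4
    rwa [abs_mul, abs_of_pos hs0] at h1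
  obtain ⟨q, hqdef⟩ : ∃ q, (|Δz| * s) / n = q := ⟨_, rfl⟩
  have hDn : n * q = |Δz| * s := by rw [← hqdef]; exact Int.mul_ediv_cancel' hdvd5
  have hDnQ : (n : ℚ) * (q : ℚ) = ((|Δz| * s : ℤ) : ℚ) := by exact_mod_cast hDn
  have hA : ((r * |Δz| : ℤ) : ℚ) = x * ((|Δz| * s : ℤ) : ℚ) := by
    push_cast
    rw [hrq]
    ring
  have hB : ((m * q : ℤ) : ℚ) = y * ((|Δz| * s : ℤ) : ℚ) := by
    rw [← hDnQ]
    push_cast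
    rw [hmq]
    ring
  have heq : (r * |Δz|) ^ 2 - Δz * (m * q) ^ 2 = 4 * (|Δz| * s) ^ 2 := by
    have hq2 : ((r * |Δz| : ℤ) : ℚ) ^ 2 - (Δz : ℚ) * ((m * q : ℤ) : ℚ) ^ 2
        = 4 * ((|Δz| * s : ℤ) : ℚ) ^ 2 := by
      rw [hA, hB]
      linear_combination (((|Δz| * s : ℤ) : ℚ)) ^ 2 * hxy
    exact_mod_cast hq2
  refine ⟨r * |Δz|, m * q, |Δz| * s, mul_pos (abs_pos.mpr hΔ) hs0, ?_, ?_, hA, hB, heq⟩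
  · rw [hr, hs]
    exact mul_le_mul_of_nonneg_left (le_max_right _ _) (abs_nonneg Δz)
  · rw [hr, hs, abs_mul, abs_abs, mul_comm |r| |Δz|]
    exact mul_le_mul_of_nonneg_left (le_max_left _ _) (abs_nonneg Δz)

set_option maxHeartbeats 1600000 in
/-- Height almost-multiplicativity for addition. -/
lemma Hz_add_le (hΔ : Δz ≠ 0) (P Q : Conic (Δz : ℚ)) :
    Hz (P + Q) ≤ 6 * Δz ^ 2 * (Hz P * Hz Q) := by
  have hP := P.property
  have hQ := Q.property
  unfold PellSol at hP hQ
  obtain ⟨A₁, B₁, D₁, hD₁, hD₁le, hA₁le, hA₁, hB₁, he₁⟩ := repr_aux hΔ P.val.1 P.val.2 hP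
  obtain ⟨A₂, B₂, D₂, hD₂, hD₂le, hA₂le, hA₂, hB₂, he₂⟩ := repr_aux hΔ Q.val.1 Q.val.2 hQ
  have hHz1 : max |P.val.1.num| ((P.val.1.den : ℤ)) = Hz P := rfl
  have hHz2 : max |Q.val.1.num| ((Q.val.1.den : ℤ)) = Hz Q := rfl
  rw [hHz1] at hD₁le hA₁le
  rw [hHz2] at hD₂le hA₂le
  have h₁1 : 1 ≤ Hz P := one_le_Hz P
  have h₂1 : 1 ≤ Hz Q := one_le_Hz Q
  have hΔ1 : 1 ≤ |Δz| := Int.one_le_abs hΔ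
  have habs : |Δz| ^ 2 = Δz ^ 2 := sq_abs Δz
  have hΔsq : 1 ≤ Δz ^ 2 := by nlinarith
  have hD12 : (0:ℤ) < 2 * (D₁ * D₂) := by positivity
  have h2DQ : ((2 * (D₁ * D₂) : ℤ) : ℚ) ≠ 0 := by exact_mod_cast hD12.ne'
  have hx3 : (P + Q).val.1 =
      ((A₁ * A₂ + Δz * (B₁ * B₂) : ℤ) : ℚ) / ((2 * (D₁ * D₂) : ℤ) : ℚ) := by
    rw [add_val]
    dsimp only
    rw [div_eq_div_iff (by norm_num : (2:ℚ) ≠ 0) h2DQ]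
    push_cast
    rw [hA₁, hA₂, hB₁, hB₂]
    ring
  -- numerator and denominator bounds
  have hA₁sq : A₁ ^ 2 ≤ Δz ^ 2 * Hz P ^ 2 := by
    nlinarith [abs_nonneg A₁, sq_abs A₁]
  have hA₂sq : A₂ ^ 2 ≤ Δz ^ 2 * Hz Q ^ 2 := by
    nlinarith [abs_nonneg A₂, sq_abs A₂]
  have hD₁sq : D₁ ^ 2 ≤ Δz ^ 2 * Hz P ^ 2 := by nlinarith
  have hD₂sq : D₂ ^ 2 ≤ Δz ^ 2 * Hz Q ^ 2 := by nlinarith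
  have hBB₁ : |Δz * B₁ ^ 2| ≤ 5 * Δz ^ 2 * Hz P ^ 2 := by
    have h : Δz * B₁ ^ 2 = A₁ ^ 2 - 4 * D₁ ^ 2 := by linear_combination -he₁
    rw [h, abs_le]
    constructor <;> nlinarith [sq_nonneg A₁, sq_nonneg D₁]
  have hBB₂ : |Δz * B₂ ^ 2| ≤ 5 * Δz ^ 2 * Hz Q ^ 2 := by
    have h : Δz * B₂ ^ 2 = A₂ ^ 2 - 4 * D₂ ^ 2 := by linear_combination -he₂
    rw [h, abs_le]
    constructor <;> nlinarith [sq_nonneg A₂, sq_nonneg D₂]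
  have hH12 : (1 : ℤ) ≤ Hz P * Hz Q := by nlinarith
  have hBBnn : (0:ℤ) ≤ 5 * Δz ^ 2 * (Hz P * Hz Q) := by nlinarith [sq_nonneg Δz]
  have hBB : |Δz * (B₁ * B₂)| ≤ 5 * Δz ^ 2 * (Hz P * Hz Q) := by
    have hsq : (Δz * (B₁ * B₂)) ^ 2 ≤ (5 * Δz ^ 2 * (Hz P * Hz Q)) ^ 2 := by
      calc (Δz * (B₁ * B₂)) ^ 2 = (Δz * B₁ ^ 2) * (Δz * B₂ ^ 2) := by ring
        _ ≤ |Δz * B₁ ^ 2| * |Δz * B₂ ^ 2| := by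
            rw [← abs_mul]; exact le_abs_self _
        _ ≤ (5 * Δz ^ 2 * Hz P ^ 2) * (5 * Δz ^ 2 * Hz Q ^ 2) :=
            mul_le_mul hBB₁ hBB₂ (abs_nonneg _) (le_trans (abs_nonneg _) hBB₁)
        _ = (5 * Δz ^ 2 * (Hz P * Hz Q)) ^ 2 := by ring
    exact le_of_pow_le_pow_left₀ two_ne_zero hBBnn (by rwa [sq_abs])
  have hAA : |A₁ * A₂| ≤ Δz ^ 2 * (Hz P * Hz Q) := by
    rw [abs_mul]
    calc |A₁| * |A₂| ≤ (|Δz| * Hz P) * (|Δz| * Hz Q) :=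
          mul_le_mul hA₁le hA₂le (abs_nonneg _) (by nlinarith [abs_nonneg A₁])
      _ = |Δz| ^ 2 * (Hz P * Hz Q) := by ring
      _ = Δz ^ 2 * (Hz P * Hz Q) := by rw [habs]
  apply Hz_le_of_eq_div hD12 hx3
  · calc |A₁ * A₂ + Δz * (B₁ * B₂)| ≤ |A₁ * A₂| + |Δz * (B₁ * B₂)| := abs_add_le _ _
      _ ≤ Δz ^ 2 * (Hz P * Hz Q) + 5 * Δz ^ 2 * (Hz P * Hz Q) := add_le_add hAA hBB
      _ = 6 * Δz ^ 2 * (Hz P * Hz Q) := by ring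
  · have t0 : (0:ℤ) ≤ |Δz| * Hz P := le_trans hD₁.le hD₁le
    have t1 : D₁ * D₂ ≤ (|Δz| * Hz P) * (|Δz| * Hz Q) := mul_le_mul hD₁le hD₂le hD₂.le t0
    have t2 : (|Δz| * Hz P) * (|Δz| * Hz Q) = Δz ^ 2 * (Hz P * Hz Q) := by
      rw [← habs]; ring
    have t3 : (0:ℤ) ≤ Δz ^ 2 * (Hz P * Hz Q) :=
      mul_nonneg (sq_nonneg _) (by linarith)
    linarith

/-! ### Analytic part -/

/-- The sequence whose limit is the canonical height. -/
noncomputable def seq (P : Conic Δ) : ℕ → ℝ := fun n => logHeight ((2 ^ n) • P) / 2 ^ n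

lemma pow_two_smul_succ (P : Conic Δ) (n : ℕ) :
    (2 ^ (n + 1)) • P = (2 ^ n) • P + (2 ^ n) • P := by
  rw [pow_succ, mul_comm, mul_smul, two_nsmul]

lemma logHeight_double_est (P : Conic Δ) :
    |logHeight (P + P) - 2 * logHeight P| ≤ Real.log 3 := by
  obtain ⟨hub, hlb⟩ := Hz_double_bounds P
  have h1 : height (P + P) ≤ 3 * height P ^ 2 := by
    rw [height_eq_Hz, height_eq_Hz]; exact_mod_cast hub
  have h2 : height P ^ 2 ≤ 3 * height (P + P) := by
    rw [height_eq_Hz, height_eq_Hz]; exact_mod_cast hlb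
  have hp : (0:ℝ) < height P := height_pos P
  have hpp : (0:ℝ) < height (P + P) := height_pos (P + P)
  unfold logHeight
  rw [abs_le]
  constructor
  · have h3 := Real.log_le_log (by positivity) h2
    rw [Real.log_mul (by norm_num) hpp.ne', Real.log_pow] at h3
    push_cast at h3
    linarith
  · have h3 := Real.log_le_log hpp h1
    rw [Real.log_mul (by norm_num) (by positivity : (height P ^ 2) ≠ 0), Real.log_pow] at h3
    push_cast at h3
    linarith

lemma seq_dist (P : Conic Δ) (n : ℕ) :
    dist (seq P n) (seq P (n + 1)) ≤ Real.log 3 * (1 / 2) ^ n := by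
  have h2n : (0:ℝ) < 2 ^ n := by positivity
  have h2n1 : (0:ℝ) < 2 ^ (n + 1) := by positivity
  have key := logHeight_double_est ((2 ^ n) • P)
  rw [← pow_two_smul_succ] at key
  rw [Real.dist_eq]
  unfold seq
  rw [show logHeight ((2 ^ n) • P) / 2 ^ n - logHeight ((2 ^ (n + 1)) • P) / 2 ^ (n + 1)
      = -((logHeight ((2 ^ (n + 1)) • P) - 2 * logHeight ((2 ^ n) • P)) / 2 ^ (n + 1)) from by
        rw [pow_succ]; field_simp; ring]
  rw [abs_neg, abs_div, abs_of_pos h2n1]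
  have hr : Real.log 3 * (1 / 2 : ℝ) ^ n = Real.log 3 / 2 ^ n := by
    rw [div_pow, one_pow]; ring
  rw [hr]
  have hlog3 : (0:ℝ) < Real.log 3 := Real.log_pos (by norm_num)
  have hmono : (2:ℝ) ^ n ≤ 2 ^ (n + 1) := by rw [pow_succ]; nlinarith
  calc |logHeight ((2 ^ (n + 1)) • P) - 2 * logHeight ((2 ^ n) • P)| / 2 ^ (n + 1)
      ≤ Real.log 3 / 2 ^ (n + 1) := (div_le_div_iff_of_pos_right h2n1).mpr key
    _ ≤ Real.log 3 / 2 ^ n := div_le_div_of_nonneg_left hlog3.le h2n hmono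

lemma tendsto_seq (P : Conic Δ) : Tendsto (seq P) atTop (𝓝 (canHeight P)) := by
  have hc : CauchySeq (seq P) :=
    cauchySeq_of_le_geometric (1 / 2) (Real.log 3) (by norm_num) (seq_dist P)
  obtain ⟨L, hL⟩ := cauchySeq_tendsto_of_complete hc
  have hEq : canHeight P = L := hL.limUnder_eq
  rwa [hEq]

lemma tendsto_const_div_two_pow (c : ℝ) :
    Tendsto (fun n : ℕ => c / 2 ^ n) atTop (𝓝 0) := by
  have h := (tendsto_pow_atTop_nhds_zero_of_lt_one
    (by norm_num : (0:ℝ) ≤ 1 / 2) (by norm_num)).const_mul c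
  rw [mul_zero] at h
  have hfun : (fun n : ℕ => c / 2 ^ n) = fun n : ℕ => c * (1 / 2 : ℝ) ^ n := by
    funext n; rw [div_pow, one_pow]; ring
  rw [hfun]
  exact h

lemma canHeight_nonneg (P : Conic Δ) : 0 ≤ canHeight P :=
  ge_of_tendsto' (tendsto_seq P) fun n => div_nonneg (logHeight_nonneg _) (by positivity)

lemma height_neg (P : Conic Δ) : height (-P) = height P := by
  unfold height
  rw [neg_val]

lemma canHeight_zero : canHeight (0 : Conic Δ) = 0 := by
  have hh : height (0 : Conic Δ) = 2 := by
    unfold height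
    rw [zero_val]
    norm_num
  have hfun : seq (0 : Conic Δ) = fun n : ℕ => Real.log 2 / 2 ^ n := by
    funext n
    unfold seq logHeight
    rw [smul_zero, hh]
  exact tendsto_nhds_unique (hfun ▸ tendsto_seq (0 : Conic Δ))
    (tendsto_const_div_two_pow (Real.log 2))

lemma canHeight_double (P : Conic Δ) : canHeight (P + P) = 2 * canHeight P := by
  have h1 : Tendsto (fun n : ℕ => seq P (n + 1)) atTop (𝓝 (canHeight P)) :=
    (tendsto_seq P).comp (tendsto_add_atTop_nat 1)
  have h2 := h1.const_mul 2
  have hfun : seq (P + P) = fun n : ℕ => 2 * seq P (n + 1) := by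
    funext n
    unfold seq
    rw [show (2 ^ n) • (P + P) = (2 ^ (n + 1)) • P from by
      rw [smul_add, ← pow_two_smul_succ], pow_succ]
    ring
  exact tendsto_nhds_unique (hfun ▸ tendsto_seq (P + P)) h2

lemma canHeight_pow2 (P : Conic Δ) (k : ℕ) :
    canHeight ((2 ^ k) • P) = 2 ^ k * canHeight P := by
  induction k with
  | zero => simp [pow_zero, one_smul]
  | succ k ih =>
      rw [pow_two_smul_succ, canHeight_double, ih, pow_succ]
      ring

lemma logHeight_add_est (hΔ : Δz ≠ 0) (P Q : Conic (Δz : ℚ)) :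
    logHeight (P + Q) ≤ logHeight P + logHeight Q + Real.log ((6 * Δz ^ 2 : ℤ) : ℝ) := by
  have hΔ1 : 1 ≤ |Δz| := Int.one_le_abs hΔ
  have habs : |Δz| ^ 2 = Δz ^ 2 := sq_abs Δz
  have hΔsq : (1:ℤ) ≤ Δz ^ 2 := by nlinarith
  have hCpos : (0:ℝ) < ((6 * Δz ^ 2 : ℤ) : ℝ) := by
    have : (1:ℤ) ≤ 6 * Δz ^ 2 := by linarith
    exact_mod_cast lt_of_lt_of_le zero_lt_one (by exact_mod_cast this)
  have hkey : height (P + Q) ≤ ((6 * Δz ^ 2 : ℤ) : ℝ) * (height P * height Q) := by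
    rw [height_eq_Hz, height_eq_Hz, height_eq_Hz]
    exact_mod_cast Hz_add_le hΔ P Q
  have hp : (0:ℝ) < height P := height_pos P
  have hq : (0:ℝ) < height Q := height_pos Q
  have hpq : (0:ℝ) < height (P + Q) := height_pos (P + Q)
  have h3 := Real.log_le_log hpq hkey
  rw [Real.log_mul hCpos.ne' (by positivity), Real.log_mul hp.ne' hq.ne'] at h3
  unfold logHeight
  linarith

lemma canHeight_add_le (hΔ : Δz ≠ 0) (P Q : Conic (Δz : ℚ)) :
    canHeight (P + Q) ≤ canHeight P + canHeight Q := by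
  have hterm : ∀ n : ℕ, seq (P + Q) n
      ≤ seq P n + seq Q n + Real.log ((6 * Δz ^ 2 : ℤ) : ℝ) / 2 ^ n := by
    intro n
    have h2n : (0:ℝ) < 2 ^ n := by positivity
    unfold seq
    rw [smul_add, ← add_div, ← add_div]
    exact (div_le_div_iff_of_pos_right h2n).mpr (logHeight_add_est hΔ ((2 ^ n) • P) ((2 ^ n) • Q))
  have hrhs : Tendsto
      (fun n : ℕ => seq P n + seq Q n + Real.log ((6 * Δz ^ 2 : ℤ) : ℝ) / 2 ^ n) atTop
      (𝓝 (canHeight P + canHeight Q + 0)) :=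
    ((tendsto_seq P).add (tendsto_seq Q)).add (tendsto_const_div_two_pow _)
  have h := le_of_tendsto_of_tendsto' (tendsto_seq (P + Q)) hrhs hterm
  simpa using h

lemma canHeight_nsmul_le (hΔ : Δz ≠ 0) (P : Conic (Δz : ℚ)) (k : ℕ) :
    canHeight (k • P) ≤ k * canHeight P := by
  induction k with
  | zero => simp [zero_smul, canHeight_zero]
  | succ k ih =>
      rw [succ_nsmul]
      calc canHeight (k • P + P) ≤ canHeight (k • P) + canHeight P :=
            canHeight_add_le hΔ _ _
        _ ≤ k * canHeight P + canHeight P := by linarith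
        _ = (k + 1 : ℕ) * canHeight P := by push_cast; ring

lemma canHeight_nsmul (hΔ : Δz ≠ 0) (P : Conic (Δz : ℚ)) (k : ℕ) :
    canHeight (k • P) = k * canHeight P := by
  have hub := canHeight_nsmul_le hΔ P k
  have hk : k ≤ 2 ^ k := (Nat.lt_two_pow_self (n := k)).le
  have hsplit : ((2 ^ k) • P) = k • P + (2 ^ k - k) • P := by
    rw [← add_nsmul, Nat.add_sub_cancel' hk]
  have h1 : canHeight ((2 ^ k) • P)
      ≤ canHeight (k • P) + ((2 ^ k - k : ℕ) : ℝ) * canHeight P := by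
    rw [hsplit]
    exact le_trans (canHeight_add_le hΔ _ _)
      (by linarith [canHeight_nsmul_le hΔ P (2 ^ k - k)])
  have h2 : canHeight ((2 ^ k) • P) = 2 ^ k * canHeight P := canHeight_pow2 P k
  have hcast : ((2 ^ k - k : ℕ) : ℝ) = 2 ^ k - k := by
    rw [Nat.cast_sub hk]
    push_cast
    ring
  rw [hcast] at h1
  rw [h2] at h1
  linarith

end Conic

end CanHeightProof


/-- The canonical height satisfies `h(2P) = 2h(P)`,
`h(P + Q) ≤ h(P) + h(Q)`, and `h(mP) = m·h(P)` for every integer `m ≥ 1`. -/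
theorem canHeight_basic (d : ℤ) (hsf : Squarefree d) (hd0 : d ≠ 0) (hd1 : d ≠ 1)
    (Δ : ℤ) (hΔ : Δ = if d % 4 = 1 then d else 4 * d) :
    (∀ P : Conic (Δ : ℚ), Conic.canHeight (2 • P) = 2 * Conic.canHeight P) ∧
    (∀ P Q : Conic (Δ : ℚ), Conic.canHeight (P + Q) ≤ Conic.canHeight P + Conic.canHeight Q) ∧
    (∀ m : ℤ, 1 ≤ m → ∀ P : Conic (Δ : ℚ),
      Conic.canHeight (m • P) = (m : ℝ) * Conic.canHeight P) := by
  
  have hΔ0 : Δ ≠ 0 := by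
    rw [hΔ]
    split_ifs
    · exact hd0
    · exact mul_ne_zero (by norm_num) hd0
  refine ⟨fun P => ?_, fun P Q => Conic.canHeight_add_le hΔ0 P Q, fun m hm P => ?_⟩
  · rw [two_nsmul]
    exact Conic.canHeight_double P
  · lift m to ℕ using (by linarith : (0:ℤ) ≤ m)
    rw [natCast_zsmul]
    push_cast
    exact Conic.canHeight_nsmul hΔ0 P m
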